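/- Theorem 1: Consider the swarm model x_i(k+1) = x_i(k) + Σ_{j≠i} g(x_i(k) − x_j(k)) with g(y) = −y(a − b·exp(−‖y‖²/c)), positive constants a, b, c with b > a, under Assumption 1 and the condition a − (a² + b²Φ²)M²/(2(M−1)) > 0 with Φ = a/b. Let ε = (b/a)·√(c/2)·exp(−1/2) and k̄ = max_{i} ⌈V_i(0)/(a·ε²)⌉, where V_i(k) = ½‖x_i(k) − x̄‖². Then every member of the swarm enters the bounded hyperball B_ε(x̄) = {x : ‖x − x̄‖ ≤ ε} within the finite time bound k̄; that is, for every i there exists k ≤ k̄ with ‖x_i(k) − x̄‖ ≤ ε. -/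

import Mathlib

/-- Attraction–repulsion function `g(y) = −y(a − b·exp(−‖y‖²/c))` on ℝⁿ. -/
noncomputable def g (a b c : ℝ) {n : ℕ} (y : EuclideanSpace ℝ (Fin n)) :
    EuclideanSpace ℝ (Fin n) :=
  (-(a - b * Real.exp (-‖y‖ ^ 2 / c))) • y

/-!
Write `e_i = x_i − x̄` and `s_i = ‖e_i‖`. The interactions are odd, so the swarm center is
stationary, and the linear attraction part of the dynamics acts on `e_i` as multiplication by
`1 − aM`. The repulsion part `b·exp(−‖y‖²/c)·y` has norm at most `b·√(c/2)·e^{−1/2} = aε`, so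
`s_i(k+1) ≤ (1 − aM)·s_i(k) + (M − 1)·aε`. The coefficient condition gives `aM < 1`, and then,
as long as `s_i(k+1) > ε`, we have `s_i(k+1) ≤ s_i(k) − aε`, hence `V_i = s_i²/2` drops by at
least `aε²` per step; it cannot do so more than `V_i(0)/(aε²)` times.
-/

open Finset

theorem mul_exp_neg_sq_div_le {c : ℝ} (hc : 0 < c) (t : ℝ) :
    t * Real.exp (-t ^ 2 / c) ≤ Real.sqrt (c / 2) * Real.exp (-(1 / 2)) := by
  set u := Real.sqrt (c / 2)
  have hu : 0 < u := Real.sqrt_pos.mpr (by positivity)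
  have hc_eq : c = 2 * u ^ 2 := by rw [Real.sq_sqrt (by positivity)]; ring
  -- `t / u ≤ (t² + u²) / (2u²) = t²/c + 1/2 ≤ exp (t²/c − 1/2)`
  have h_amgm : t ≤ u * (t ^ 2 / c + 1 / 2) := by
    rw [hc_eq]; field_simp; nlinarith [sq_nonneg (t - u)]
  have h_exp : t ^ 2 / c + 1 / 2 ≤ Real.exp (t ^ 2 / c - 1 / 2) := by
    linarith [Real.add_one_le_exp (t ^ 2 / c - 1 / 2)]
  calc t * Real.exp (-t ^ 2 / c)
      ≤ u * Real.exp (t ^ 2 / c - 1 / 2) * Real.exp (-t ^ 2 / c) := by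
        gcongr
        exact h_amgm.trans (by gcongr)
    _ = u * Real.exp (-(1 / 2)) := by rw [mul_assoc, ← Real.exp_add]; ring_nf

theorem sum_sum_erase_eq_zero_of_antisymm {ι β : Type*} [Fintype ι] [DecidableEq ι]
    [AddCommGroup β] (F : ι → ι → β) (hF : ∀ i j, F i j = -F j i) :
    ∑ i, ∑ j ∈ univ.erase i, F i j = 0 := by
  rw [sum_sigma']
  refine sum_involution (fun p _ => ⟨p.2, p.1⟩) (fun p _ => by simp [hF p.1 p.2])
    (fun p hp _ h => ?_) (fun p hp => ?_) (fun _ _ => rfl)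
  · simp only [mem_sigma, mem_univ, mem_erase, true_and] at hp
    exact hp.1 (congrArg Sigma.fst h)
  · simp only [mem_sigma, mem_univ, mem_erase, true_and, ne_eq] at hp ⊢
    exact ⟨Ne.symm hp.1, trivial⟩

theorem sum_erase_sub {ι E : Type*} [Fintype ι] [DecidableEq ι] [AddCommGroup E]
    (y : ι → E) (i : ι) :
    ∑ j ∈ univ.erase i, (y i - y j) = Fintype.card ι • y i - ∑ j, y j := by
  rw [sum_sub_distrib, sum_const, card_erase_of_mem (mem_univ i), card_univ,
    sum_erase_eq_sub (mem_univ i)]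
  obtain ⟨m, hm⟩ := Nat.exists_eq_add_of_lt (Fintype.card_pos_iff.mpr ⟨i⟩)
  rw [hm, Nat.add_sub_cancel, succ_nsmul]
  abel

theorem exists_le_ceil_div_of_decrease {V : ℕ → ℝ} {P : ℕ → Prop} {r : ℝ} (hr : 0 < r)
    (hpos : ∀ k, ¬P k → 0 < V k) (hdec : ∀ k, ¬P (k + 1) → V (k + 1) ≤ V k - r) :
    ∃ k ≤ ⌈V 0 / r⌉₊, P k := by
  by_contra! hnot
  set K := ⌈V 0 / r⌉₊
  have hV : ∀ k ≤ K, V k ≤ V 0 - k * r := by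
    intro k hk
    induction k with
    | zero => simp
    | succ k ih =>
      have := hdec k (hnot _ hk)
      push_cast
      linarith [ih (by omega)]
  have hK : V 0 ≤ K * r := (div_le_iff₀ hr).mp (Nat.le_ceil _)
  linarith [hV K le_rfl, hpos K (hnot K le_rfl)]

theorem half_sq_le_half_sq_sub_of_contraction {s s' a m ε : ℝ} (ha : 0 ≤ a) (hm : 0 ≤ m)
    (hε : 0 < ε) (hma : a * m ≤ 1) (hs' : ε < s')
    (hrec : s' ≤ (1 - a * m) * s + (m - 1) * (a * ε)) :
    1 / 2 * s' ^ 2 ≤ 1 / 2 * s ^ 2 - a * ε ^ 2 := by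
  -- the contraction has fixed point `(1 − 1/m)·ε < ε`, so `s' > ε` forces `s ≥ ε` ...
  have hs_ge : ε ≤ s := by
    by_contra! h
    nlinarith [mul_le_mul_of_nonneg_left h.le (sub_nonneg.mpr hma), mul_nonneg ha hε.le]
  -- ... and then a drop `s − s' ≥ aε`, while `s + s' ≥ 2ε`
  have hdrop : a * ε ≤ s - s' := by
    nlinarith [mul_le_mul_of_nonneg_left (sub_nonneg.mpr hs_ge) (mul_nonneg ha hm)]
  nlinarith [mul_le_mul hdrop (by linarith : 2 * ε ≤ s + s') (by positivity)
    ((mul_nonneg ha hε.le).trans hdrop)]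

section Swarm

variable {a b c : ℝ} {n : ℕ}

theorem g_neg (y : EuclideanSpace ℝ (Fin n)) : g a b c (-y) = -g a b c y := by
  simp only [g, norm_neg, smul_neg]

theorem norm_g_add_smul_le (hb : 0 ≤ b) (hc : 0 < c) (y : EuclideanSpace ℝ (Fin n)) :
    ‖g a b c y + a • y‖ ≤ b * (Real.sqrt (c / 2) * Real.exp (-(1 / 2))) := by
  have hrep : g a b c y + a • y = (b * Real.exp (-‖y‖ ^ 2 / c)) • y := by
    simp only [g]; module
  rw [hrep, norm_smul, Real.norm_of_nonneg (by positivity), mul_assoc]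
  exact mul_le_mul_of_nonneg_left (by linarith [mul_exp_neg_sq_div_le hc ‖y‖]) hb

variable {M : ℕ} {x : ℕ → Fin M → EuclideanSpace ℝ (Fin n)}

theorem sum_swarm_eq_sum_zero
    (hdyn : ∀ k i, x (k + 1) i = x k i + ∑ j ∈ univ.erase i, g a b c (x k i - x k j)) (k : ℕ) :
    ∑ j, x k j = ∑ j, x 0 j := by
  induction k with
  | zero => rfl
  | succ k ih =>
    have hint : ∑ i, ∑ j ∈ univ.erase i, g a b c (x k i - x k j) = 0 :=
      sum_sum_erase_eq_zero_of_antisymm _ fun i j => by rw [← g_neg, neg_sub]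
    simp only [hdyn, sum_add_distrib, hint, add_zero, ih]

theorem norm_swarm_sub_center_succ_le
    (hb : 0 ≤ b) (hc : 0 < c) (haM : a * M ≤ 1)
    (hdyn : ∀ k i, x (k + 1) i = x k i + ∑ j ∈ univ.erase i, g a b c (x k i - x k j))
    (k : ℕ) (i : Fin M) :
    ‖x (k + 1) i - (M : ℝ)⁻¹ • ∑ j, x 0 j‖ ≤ (1 - a * M) * ‖x k i - (M : ℝ)⁻¹ • ∑ j, x 0 j‖
      + (M - 1) * (b * (Real.sqrt (c / 2) * Real.exp (-(1 / 2)))) := by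
  set xbar := (M : ℝ)⁻¹ • ∑ j, x 0 j
  have hM : (M : ℝ) ≠ 0 := Nat.cast_ne_zero.mpr (Fin.pos i).ne'
  have hattr : ∑ j ∈ univ.erase i, (x k i - x k j) = (M : ℝ) • (x k i - xbar) := by
    rw [sum_erase_sub, sum_swarm_eq_sum_zero hdyn, Fintype.card_fin, ← Nat.cast_smul_eq_nsmul ℝ,
      smul_sub, smul_inv_smul₀ hM]
  have herr : x (k + 1) i - xbar = (1 - a * M) • (x k i - xbar)
      + ∑ j ∈ univ.erase i, (g a b c (x k i - x k j) + a • (x k i - x k j)) := by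
    rw [sum_add_distrib, ← smul_sum, hattr, hdyn, smul_smul]
    module
  rw [herr]
  refine (norm_add_le _ _).trans (add_le_add ?_ ?_)
  · rw [norm_smul, Real.norm_of_nonneg (by linarith)]
  · refine (norm_sum_le _ _).trans ((sum_le_sum fun j _ => norm_g_add_smul_le hb hc _).trans ?_)
    rw [sum_const, card_erase_of_mem (mem_univ i), card_univ, Fintype.card_fin, nsmul_eq_mul,
      Nat.cast_pred (Fin.pos i)]

end Swarm

theorem mul_lt_one_of_coeff_pos {a b m : ℝ} (hm : 2 ≤ m) (ha : 0 < a) (hb : 0 < b)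
    (hκ : 0 < a - (a ^ 2 + b ^ 2 * (a / b) ^ 2) * m ^ 2 / (2 * (m - 1))) :
    a * m < 1 := by
  have hm1 : 0 < m - 1 := by linarith
  have hsimp : (a ^ 2 + b ^ 2 * (a / b) ^ 2) * m ^ 2 / (2 * (m - 1)) = a ^ 2 * m ^ 2 / (m - 1) := by
    field_simp; ring
  rw [hsimp, sub_pos, div_lt_iff₀ hm1] at hκ
  nlinarith [mul_pos ha (by linarith : (0 : ℝ) < m)]

theorem theorem1_general {n M : ℕ} (hM : 2 ≤ M) (a b c : ℝ)
    (ha : 0 < a) (hb : 0 < b) (hc : 0 < c)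
    (x : ℕ → Fin M → EuclideanSpace ℝ (Fin n))
    (hdyn : ∀ k i, x (k + 1) i =
      x k i + ∑ j ∈ Finset.univ.erase i, g a b c (x k i - x k j))
    (hκ : 0 < a - (a ^ 2 + b ^ 2 * (a / b) ^ 2) * (M : ℝ) ^ 2 / (2 * ((M : ℝ) - 1))) :
    let ε : ℝ := b / a * Real.sqrt (c / 2) * Real.exp (-(1 / 2 : ℝ))
    let xbar : EuclideanSpace ℝ (Fin n) := (M : ℝ)⁻¹ • ∑ j, x 0 j
    let kbar : ℕ := Finset.univ.sup
      (fun i : Fin M => ⌈(1 / 2) * ‖x 0 i - xbar‖ ^ 2 / (a * ε ^ 2)⌉₊)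
    ∀ i : Fin M, ∃ k ≤ kbar, ‖x k i - xbar‖ ≤ ε := by
  intro ε xbar kbar i
  have haM : a * M ≤ 1 :=
    (mul_lt_one_of_coeff_pos (by exact_mod_cast hM) ha hb hκ).le
  have hε : 0 < ε := by positivity
  have haε : b * (Real.sqrt (c / 2) * Real.exp (-(1 / 2))) = a * ε := by
    simp only [ε]; field_simp
  obtain ⟨k, hk, hkε⟩ := exists_le_ceil_div_of_decrease (mul_pos ha (pow_pos hε 2))
    (V := fun k => 1 / 2 * ‖x k i - xbar‖ ^ 2) (P := fun k => ‖x k i - xbar‖ ≤ ε)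
    (fun k hk => by have := hε.trans (not_le.mp hk); positivity)
    (fun k hk => half_sq_le_half_sq_sub_of_contraction ha.le M.cast_nonneg hε haM (not_le.mp hk)
      (haε ▸ norm_swarm_sub_center_succ_le hb.le hc haM hdyn k i))
  exact ⟨k, hk.trans (Finset.le_sup (f := fun i : Fin M =>
    ⌈1 / 2 * ‖x 0 i - xbar‖ ^ 2 / (a * ε ^ 2)⌉₊) (Finset.mem_univ i)), hkε⟩

/-- Theorem 1: under Assumption 1 (pairwise distances always
exceed `δ = √(c·ln(b/a))`) and the coefficient condition
`a − (a²+b²Φ²)M²/(2(M−1)) > 0` with `Φ = a/b`, every member of the swarm enters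
the hyperball `B_ε(x̄)`, `ε = (b/a)·√(c/2)·exp(−1/2)`, within the finite time
bound `k̄ = max_i ⌈V_i(0)/(a·ε²)⌉`. -/
theorem theorem1 {n M : ℕ} (hM : 2 ≤ M) (a b c : ℝ)
    (ha : 0 < a) (hb : 0 < b) (hc : 0 < c) (hba : a < b)
    (x : ℕ → Fin M → EuclideanSpace ℝ (Fin n))
    (hdyn : ∀ k i, x (k + 1) i =
      x k i + ∑ j ∈ Finset.univ.erase i, g a b c (x k i - x k j))
    (hsep : ∀ (k : ℕ) (i j : Fin M), i ≠ j →
      Real.sqrt (c * Real.log (b / a)) < ‖x k i - x k j‖)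
    (hκ : 0 < a - (a ^ 2 + b ^ 2 * (a / b) ^ 2) * (M : ℝ) ^ 2 / (2 * ((M : ℝ) - 1))) :
    let ε : ℝ := b / a * Real.sqrt (c / 2) * Real.exp (-(1 / 2 : ℝ))
    let xbar : EuclideanSpace ℝ (Fin n) := (M : ℝ)⁻¹ • ∑ j, x 0 j
    let kbar : ℕ := Finset.univ.sup
      (fun i : Fin M => ⌈(1 / 2) * ‖x 0 i - xbar‖ ^ 2 / (a * ε ^ 2)⌉₊)
    ∀ i : Fin M, ∃ k ≤ kbar, ‖x k i - xbar‖ ≤ ε :=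
  theorem1_general hM a b c ha hb hc x hdyn hκ
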